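/- Fix b ∈ ℝ with b ≠ −3/16, set γ = 1 + (16/3)b, and when γ < 0 set s_* = √(−γ/(1−γ)). Let ω > 0 and let c satisfy −2√ω < c ≤ 2√ω if γ > 0, or −2√ω < c < −2 s_* √ω if γ < 0. Then the momentum of the soliton satisfies P(φ_{ω,c}) = (c/2)·(−1 + 1/γ)·M(φ_{ω,c}) + (2/γ)·√(4ω − c²), where M(φ_{ω,c}) = ∫_ℝ Φ_{ω,c}² and P(φ_{ω,c}) = Re ∫_ℝ i φ_{ω,c}'(x)·conj(φ_{ω,c}(x)) dx. -/

import Mathlib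

open MeasureTheory Real Set

/-- The soliton profile of the derivative NLS after gauge transformation:
the algebraic profile when `c = 2√ω`, the bright profile when `-2√ω < c < 2√ω`. -/
noncomputable def Phi (γ ω c x : ℝ) : ℝ :=
  if c = 2 * Real.sqrt ω then
    Real.sqrt (4 * c / ((c * x) ^ 2 + γ))
  else
    Real.sqrt (2 * (4 * ω - c ^ 2) /
      (Real.sqrt (c ^ 2 + γ * (4 * ω - c ^ 2)) * Real.cosh (Real.sqrt (4 * ω - c ^ 2) * x) - c))

/-- The complex soliton profile
`φ_{ω,c}(x) = exp(i((c/2)x - (1/4)∫_{-∞}^x Φ²)) Φ(x)`. -/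
noncomputable def solp (γ ω c x : ℝ) : ℂ :=
  Complex.exp (Complex.I *
      Complex.ofReal (c / 2 * x - 1 / 4 * ∫ y in Iic x, (Phi γ ω c y) ^ 2)) *
    Complex.ofReal (Phi γ ω c x)

/-- The mass `M(φ_{ω,c}) = ∫_ℝ Φ_{ω,c}²`. -/
noncomputable def solMass (γ ω c : ℝ) : ℝ := ∫ x : ℝ, (Phi γ ω c x) ^ 2

/-- The momentum `P(φ_{ω,c}) = Re ∫_ℝ i φ' conj(φ)`. -/
noncomputable def solMom (γ ω c : ℝ) : ℝ :=
  (∫ x : ℝ, Complex.I * deriv (fun y => solp γ ω c y) x *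
    (starRingEnd ℂ) (solp γ ω c x)).re

/-! Write `Φ² = u`. For `φ = e^{iθ} Φ` with `θ' = c/2 - Φ²/4` one has `i φ' φ̄ = -θ' Φ² + i Φ' Φ`,
so `P = ∫ (-(c/2) u + u²/4) = (c/2)(-1 + 1/γ) M + (1/4) ∫ (u² - (2c/γ) u)`. The last integrand is
the derivative of an explicit odd function, `(8c²/γ) x / ((cx)² + γ)` for the algebraic profile and
`(4ka/γ) sinh (kx) / (a cosh (kx) - c)` with `k = √(4ω - c²)`, `a = √(c² + γk²)` for the bright one,
so its integral is twice the limit at `+∞`: `0`, resp. `8k/γ`. -/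

open Filter Topology

lemma one_add_sq_div_two_le_cosh (y : ℝ) : 1 + y ^ 2 / 2 ≤ Real.cosh y := by
  have h_sinh : |y / 2| ≤ |Real.sinh (y / 2)| := by
    rw [Real.abs_sinh]; exact Real.self_le_sinh_iff.2 (abs_nonneg _)
  have h_cosh : Real.cosh y = 1 + 2 * Real.sinh (y / 2) ^ 2 := by
    conv_lhs => rw [← mul_div_cancel₀ y two_ne_zero, Real.cosh_two_mul]
    linear_combination Real.cosh_sq_sub_sinh_sq (y / 2)
  nlinarith [sq_abs (y / 2), sq_abs (Real.sinh (y / 2)), abs_nonneg (y / 2)]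

lemma integrable_of_abs_le_div_one_add_sq {f : ℝ → ℝ} {C : ℝ} (hf : Continuous f)
    (h : ∀ x, |f x| ≤ C / (1 + x ^ 2)) : Integrable f :=
  (integrable_inv_one_add_sq.const_mul C).mono' hf.aestronglyMeasurable
    (ae_of_all _ fun x => by simpa [div_eq_mul_inv] using h x)

lemma integrable_of_abs_le_div_cosh {f : ℝ → ℝ} {C k : ℝ} (hk : 0 < k) (hf : Continuous f)
    (h : ∀ x, |f x| ≤ C / Real.cosh (k * x)) : Integrable f := by
  have hC : 0 ≤ C := by simpa using (abs_nonneg _).trans (h 0)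
  set m := min 1 (k ^ 2 / 2)
  have hm : 0 < m := lt_min one_pos (by positivity)
  refine integrable_of_abs_le_div_one_add_sq (C := C / m) hf fun x => (h x).trans ?_
  have h_sq : m * (1 + x ^ 2) ≤ Real.cosh (k * x) := by
    have := one_add_sq_div_two_le_cosh (k * x)
    nlinarith [min_le_left 1 (k ^ 2 / 2), min_le_right 1 (k ^ 2 / 2), sq_nonneg x]
  rw [div_div]
  exact div_le_div_of_nonneg_left hC (by positivity) h_sq

theorem hasDerivAt_integral_Iic {E : Type*} [NormedAddCommGroup E] [NormedSpace ℝ E]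
    [CompleteSpace E] {g : ℝ → E} (hg : Continuous g) (hi : Integrable g) (x : ℝ) :
    HasDerivAt (fun z => ∫ y in Iic z, g y) (g x) x := by
  have h_eq : (fun z => ∫ y in Iic z, g y) = fun z => (∫ y in Iic 0, g y) + ∫ y in 0..z, g y := by
    funext z
    rw [← intervalIntegral.integral_Iic_sub_Iic hi.integrableOn hi.integrableOn]
    abel
  rw [h_eq]
  exact (intervalIntegral.integral_hasDerivAt_right hi.intervalIntegrable
    (hg.stronglyMeasurableAtFilter _ _) hg.continuousAt).const_add _

theorem integral_eq_two_mul_of_odd {f G : ℝ → ℝ} {L : ℝ} (hG : ∀ x, HasDerivAt G (f x) x)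
    (hf : Integrable f) (hodd : ∀ x, G (-x) = -G x) (hL : Tendsto G atTop (𝓝 L)) :
    ∫ x, f x = 2 * L := by
  have hL' : Tendsto G atBot (𝓝 (-L)) := by
    have := (hL.comp tendsto_neg_atBot_atTop).neg
    refine this.congr fun x => ?_
    simp [hodd]
  rw [integral_of_hasDerivAt_of_tendsto hG hf hL' hL]
  ring

open Complex ComplexConjugate in
theorem re_integral_I_mul_deriv_mul_conj {f f' θ θ' : ℝ → ℝ}
    (hf : ∀ x, HasDerivAt f (f' x) x) (hθ : ∀ x, HasDerivAt θ (θ' x) x)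
    (h_int : Integrable fun x => θ' x * f x ^ 2) (h_int' : Integrable fun x => f' x * f x) :
    (∫ x, I * deriv (fun y => exp (I * θ y) * f y) x * conj (exp (I * θ x) * f x)).re
      = -∫ x, θ' x * f x ^ 2 := by
  have h_deriv : ∀ x, deriv (fun y => exp (I * θ y) * f y) x
      = exp (I * θ x) * (I * θ' x * f x + f' x) := fun x =>
    ((((hθ x).ofReal_comp.const_mul I).cexp).mul (hf x).ofReal_comp).deriv.trans (by ring)
  have h_pt : ∀ x, I * deriv (fun y => exp (I * θ y) * f y) x * conj (exp (I * θ x) * f x)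
      = ((-(θ' x * f x ^ 2) : ℝ) : ℂ) + I * ((f' x * f x : ℝ) : ℂ) := by
    intro x
    have h_unit : exp (I * θ x) * conj (exp (I * θ x)) = 1 := by
      rw [← Complex.exp_conj, ← Complex.exp_add]; simp
    rw [h_deriv, map_mul, conj_ofReal]
    push_cast
    linear_combination (I * (I * θ' x * f x + f' x) * f x) * h_unit + θ' x * f x ^ 2 * I_sq
  have h_int_c : Integrable fun x => ((-(θ' x * f x ^ 2) : ℝ) : ℂ) + I * ((f' x * f x : ℝ) : ℂ) :=
    h_int.neg.ofReal.add (h_int'.ofReal.const_mul I)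
  simp_rw [h_pt]
  rw [← RCLike.re_eq_complex_re, ← integral_re h_int_c, ← integral_neg]
  simp [-Complex.ofReal_pow]

theorem solMom_eq_of_Phi_eq_sqrt {γ ω c L : ℝ} {u u' G : ℝ → ℝ}
    (hΦ : ∀ x, Phi γ ω c x = √(u x)) (hu : ∀ x, 0 < u x)
    (hu' : ∀ x, HasDerivAt u (u' x) x) (hu_int : Integrable u)
    (hu2_int : Integrable fun x => u x ^ 2) (hu'_int : Integrable u')
    (hG : ∀ x, HasDerivAt G (u x ^ 2 - 2 * c / γ * u x) x) (hG_odd : ∀ x, G (-x) = -G x)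
    (hG_lim : Tendsto G atTop (𝓝 L)) :
    solMom γ ω c = c / 2 * (-1 + 1 / γ) * solMass γ ω c + L / 2 := by
  have hΦ2 : ∀ x, Phi γ ω c x ^ 2 = u x := fun x => by rw [hΦ, sq_sqrt (hu x).le]
  have hΦ2_cont : Continuous fun x => Phi γ ω c x ^ 2 := by
    simp_rw [hΦ2]; exact continuous_iff_continuousAt.2 fun x => (hu' x).continuousAt
  have hΦ2_int : Integrable fun x => Phi γ ω c x ^ 2 := by simpa only [hΦ2] using hu_int
  have hΦ' : ∀ x, HasDerivAt (Phi γ ω c) (u' x / (2 * √(u x))) x := fun x => by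
    rw [show Phi γ ω c = fun x => √(u x) from funext hΦ]
    exact (hu' x).sqrt (hu x).ne'
  have hθ : ∀ x, HasDerivAt (fun x => c / 2 * x - 1 / 4 * ∫ y in Iic x, Phi γ ω c y ^ 2)
      (c / 2 - u x / 4) x := fun x => by
    refine (((hasDerivAt_id x).const_mul (c / 2)).sub
      ((hasDerivAt_integral_Iic hΦ2_cont hΦ2_int x).const_mul (1 / 4))).congr_deriv ?_
    rw [hΦ2]; ring
  have h_int : Integrable fun x => (c / 2 - u x / 4) * Phi γ ω c x ^ 2 := by
    simp_rw [hΦ2, sub_mul]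
    exact (hu_int.const_mul _).sub ((hu2_int.div_const 4).congr (ae_of_all _ fun x => by ring))
  have h_int' : Integrable fun x => u' x / (2 * √(u x)) * Phi γ ω c x := by
    have h_eq : ∀ x, u' x / (2 * √(u x)) * Phi γ ω c x = u' x / 2 := fun x => by
      have := (sqrt_pos.2 (hu x)).ne'
      rw [hΦ]; field_simp
    simp_rw [h_eq]; exact hu'_int.div_const 2
  have h_mom : solMom γ ω c = ∫ x, (-(c / 2) * u x + u x ^ 2 / 4) := by
    refine (re_integral_I_mul_deriv_mul_conj hΦ' hθ h_int h_int').trans ?_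
    rw [← integral_neg]
    congr 1; funext x; rw [hΦ2]; ring
  have hG'_int : Integrable fun x => u x ^ 2 - 2 * c / γ * u x :=
    hu2_int.sub (hu_int.const_mul _)
  have h_G : ∫ x, (u x ^ 2 - 2 * c / γ * u x) = 2 * L :=
    integral_eq_two_mul_of_odd hG hG'_int hG_odd hG_lim
  have h_split : ∀ x, -(c / 2) * u x + u x ^ 2 / 4
      = c / 2 * (-1 + 1 / γ) * u x + (u x ^ 2 - 2 * c / γ * u x) / 4 := fun x => by ring
  rw [h_mom, solMass]
  simp_rw [h_split, hΦ2]
  rw [integral_add (hu_int.const_mul _) (hG'_int.div_const 4),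
    integral_const_mul, integral_div, h_G]
  ring

lemma integrable_sq_of_le {u : ℝ → ℝ} {B : ℝ} (hu : Integrable u) (h0 : ∀ x, 0 ≤ u x)
    (hB : ∀ x, u x ≤ B) : Integrable fun x => u x ^ 2 := by
  simp_rw [sq]
  exact hu.mul_bdd hu.aestronglyMeasurable
    (ae_of_all _ fun x => by rw [Real.norm_of_nonneg (h0 x)]; exact hB x)

lemma min_mul_one_add_sq_le (c γ x : ℝ) : min γ (c ^ 2) * (1 + x ^ 2) ≤ (c * x) ^ 2 + γ := by
  nlinarith [min_le_left γ (c ^ 2), min_le_right γ (c ^ 2), sq_nonneg x]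

lemma tendsto_div_mul_sq_add_atTop (c γ : ℝ) (hc : c ≠ 0) :
    Tendsto (fun x => x / ((c * x) ^ 2 + γ)) atTop (𝓝 0) := by
  -- `x / ((c x)² + γ) = t / (c² + γ t²)` with `t = x⁻¹`
  have h_cont : ContinuousAt (fun t : ℝ => t / (c ^ 2 + γ * t ^ 2)) 0 :=
    continuousAt_id.div (by fun_prop) (by simpa using hc)
  have h_lim := h_cont.tendsto.comp tendsto_inv_atTop_zero
  simp only [zero_div] at h_lim
  refine h_lim.congr' ?_
  filter_upwards [eventually_ne_atTop 0] with x hx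
  simp only [Function.comp]
  field_simp

lemma integrable_div_mul_sq_add_sq {c γ : ℝ} (hc : c ≠ 0) (hγ : 0 < γ) :
    Integrable fun x => x / ((c * x) ^ 2 + γ) ^ 2 := by
  set m := min γ (c ^ 2)
  have hm : 0 < m := lt_min hγ (by positivity)
  have hq : ∀ x, 0 < (c * x) ^ 2 + γ := fun x => by positivity
  refine integrable_of_abs_le_div_one_add_sq (C := 1 / (2 * m ^ 2))
    (by fun_prop (disch := exact fun x => pow_ne_zero 2 (hq x).ne')) fun x => ?_
  have h_abs : 2 * |x| ≤ 1 + x ^ 2 := by nlinarith [sq_abs x, sq_nonneg (|x| - 1)]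
  have h_sq : (m * (1 + x ^ 2)) ^ 2 ≤ ((c * x) ^ 2 + γ) ^ 2 :=
    pow_le_pow_left₀ (by positivity) (min_mul_one_add_sq_le c γ x) 2
  calc |x / ((c * x) ^ 2 + γ) ^ 2| = (2 * |x|) / (2 * ((c * x) ^ 2 + γ) ^ 2) := by
        rw [abs_div, abs_of_pos (pow_pos (hq x) 2)]; field_simp
    _ ≤ (1 + x ^ 2) / (2 * (m * (1 + x ^ 2)) ^ 2) := by gcongr
    _ = 1 / (2 * m ^ 2) / (1 + x ^ 2) := by field_simp

theorem solMom_eq_of_Phi_eq_algebraic {γ ω c : ℝ} (hγ : 0 < γ) (hc : 0 < c)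
    (hΦ : ∀ x, Phi γ ω c x = √(4 * c / ((c * x) ^ 2 + γ))) :
    solMom γ ω c = c / 2 * (-1 + 1 / γ) * solMass γ ω c := by
  set q : ℝ → ℝ := fun x => (c * x) ^ 2 + γ with hq_def
  have hqγ : ∀ x, γ ≤ q x := fun x => le_add_of_nonneg_left (sq_nonneg _)
  have hq : ∀ x, 0 < q x := fun x => hγ.trans_le (hqγ x)
  have hq_deriv : ∀ x, HasDerivAt q (2 * c ^ 2 * x) x := fun x =>
    ((((hasDerivAt_id x).const_mul c).pow 2).add_const γ).congr_deriv (by simp; ring)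
  have hm : 0 < min γ (c ^ 2) := lt_min hγ (by positivity)
  have hu_int : Integrable fun x => 4 * c / q x := by
    refine integrable_of_abs_le_div_one_add_sq (C := 4 * c / min γ (c ^ 2))
      (by fun_prop (disch := exact fun x => (hq x).ne')) fun x => ?_
    rw [abs_of_pos (div_pos (by positivity) (hq x)), div_div]
    exact div_le_div_of_nonneg_left (by positivity) (by positivity) (min_mul_one_add_sq_le c γ x)
  refine (solMom_eq_of_Phi_eq_sqrt (u := fun x => 4 * c / q x)
    (u' := fun x => -(8 * c ^ 3 * x) / q x ^ 2) (G := fun x => 8 * c ^ 2 / γ * (x / q x))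
    hΦ (fun x => div_pos (by positivity) (hq x)) ?_ hu_int ?_ ?_ ?_ ?_
    (by simpa using (tendsto_div_mul_sq_add_atTop c γ hc.ne').const_mul (8 * c ^ 2 / γ))).trans
    (by ring)
  · intro x
    exact ((hasDerivAt_const x (4 * c)).div (hq_deriv x) (hq x).ne').congr_deriv
      (by field_simp; ring)
  · exact integrable_sq_of_le hu_int (fun x => (div_pos (by positivity) (hq x)).le)
      fun x => div_le_div_of_nonneg_left (by positivity) hγ (hqγ x)
  · exact ((integrable_div_mul_sq_add_sq hc.ne' hγ).const_mul (-(8 * c ^ 3))).congr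
      (ae_of_all _ fun x => by simp only [hq_def]; ring)
  · intro x
    refine (((hasDerivAt_id x).div (hq_deriv x) (hq x).ne').const_mul _).congr_deriv ?_
    have := (hq x).ne'
    field_simp
    simp only [hq_def, id]
    ring
  · intro x
    simp only [hq_def]
    ring

lemma sub_max_mul_cosh_le (a c y : ℝ) : (a - max c 0) * Real.cosh y ≤ a * Real.cosh y - c := by
  rcases le_total c 0 with hc | hc
  · rw [max_eq_right hc]; linarith
  · rw [max_eq_left hc]; nlinarith [Real.one_le_cosh y]

lemma tendsto_sinh_div_mul_cosh_sub {a c : ℝ} (ha : 0 < a) :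
    Tendsto (fun y => Real.sinh y / (a * Real.cosh y - c)) atTop (𝓝 (1 / a)) := by
  -- `sinh y / (a cosh y - c) = h t` with `t = e^{-y}`
  set h : ℝ → ℝ := fun t => (1 - t ^ 2) / (a * (1 + t ^ 2) - 2 * c * t)
  have h_cont : ContinuousAt h 0 := by
    refine ContinuousAt.div (by fun_prop) (by fun_prop) ?_
    simpa using ha.ne'
  have h_lim := h_cont.tendsto.comp Real.tendsto_exp_neg_atTop_nhds_zero
  simp only [h, Function.comp_def] at h_lim
  norm_num at h_lim
  rw [one_div]
  refine h_lim.congr fun y => ?_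
  have h_exp : 2 * Real.exp (-y) ≠ 0 := by positivity
  rw [← mul_div_mul_left (Real.sinh y) _ h_exp, Real.sinh_eq, Real.cosh_eq]
  congr 1
  · rw [Real.exp_neg]; field_simp
  · rw [Real.exp_neg]; field_simp

lemma integrable_sinh_div_mul_cosh_sub_sq {a c k : ℝ} (hk : 0 < k) (ha : 0 < a) (hac : c < a) :
    Integrable fun x => Real.sinh (k * x) / (a * Real.cosh (k * x) - c) ^ 2 := by
  set m := a - max c 0
  have hm : 0 < m := sub_pos.2 (max_lt hac ha)
  have hD : ∀ x, 0 < a * Real.cosh (k * x) - c := fun x =>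
    (mul_pos hm (Real.cosh_pos _)).trans_le (sub_max_mul_cosh_le a c (k * x))
  refine integrable_of_abs_le_div_cosh (C := 1 / m ^ 2) hk
    (by fun_prop (disch := exact fun x => pow_ne_zero 2 (hD x).ne')) fun x => ?_
  have h_sinh : |Real.sinh (k * x)| ≤ Real.cosh (k * x) := by
    rw [Real.abs_sinh, ← Real.cosh_abs]; exact (Real.sinh_lt_cosh _).le
  have h_sq : (m * Real.cosh (k * x)) ^ 2 ≤ (a * Real.cosh (k * x) - c) ^ 2 :=
    pow_le_pow_left₀ (by positivity) (sub_max_mul_cosh_le a c (k * x)) 2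
  have := Real.cosh_pos (k * x)
  calc |Real.sinh (k * x) / (a * Real.cosh (k * x) - c) ^ 2|
      = |Real.sinh (k * x)| / (a * Real.cosh (k * x) - c) ^ 2 := by
        rw [abs_div, abs_of_pos (pow_pos (hD x) 2)]
    _ ≤ Real.cosh (k * x) / (m * Real.cosh (k * x)) ^ 2 := by gcongr
    _ = 1 / m ^ 2 / Real.cosh (k * x) := by field_simp

theorem solMom_eq_of_Phi_eq_bright {γ ω c a k : ℝ} (hγ : γ ≠ 0) (hk : 0 < k) (ha : 0 < a)
    (hac : c < a) (ha2 : a ^ 2 = c ^ 2 + γ * k ^ 2)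
    (hΦ : ∀ x, Phi γ ω c x = √(2 * k ^ 2 / (a * Real.cosh (k * x) - c))) :
    solMom γ ω c = c / 2 * (-1 + 1 / γ) * solMass γ ω c + 2 * k / γ := by
  set D : ℝ → ℝ := fun x => a * Real.cosh (k * x) - c with hD_def
  set m := a - max c 0
  have hm : 0 < m := sub_pos.2 (max_lt hac ha)
  have hDm : ∀ x, m * Real.cosh (k * x) ≤ D x := fun x => sub_max_mul_cosh_le a c (k * x)
  have hD : ∀ x, 0 < D x := fun x => (mul_pos hm (Real.cosh_pos _)).trans_le (hDm x)
  have hD_deriv : ∀ x, HasDerivAt D (a * (Real.sinh (k * x) * k)) x := fun x =>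
    (((Real.hasDerivAt_cosh (k * x)).comp x (hasDerivAt_const_mul k)).const_mul a).sub_const c
  have hu_le : ∀ x, 2 * k ^ 2 / D x ≤ 2 * k ^ 2 / m / Real.cosh (k * x) := fun x => by
    rw [div_div]; exact div_le_div_of_nonneg_left (by positivity) (by positivity) (hDm x)
  have hu_int : Integrable fun x => 2 * k ^ 2 / D x :=
    integrable_of_abs_le_div_cosh hk (by fun_prop (disch := exact fun x => (hD x).ne'))
      fun x => by rw [abs_of_pos (div_pos (by positivity) (hD x))]; exact hu_le x
  refine (solMom_eq_of_Phi_eq_sqrt (u := fun x => 2 * k ^ 2 / D x)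
    (u' := fun x => -(2 * k ^ 3 * a * Real.sinh (k * x)) / D x ^ 2)
    (G := fun x => 4 * k * a / γ * (Real.sinh (k * x) / D x))
    hΦ (fun x => div_pos (by positivity) (hD x)) ?_ hu_int ?_ ?_ ?_ ?_
    (((tendsto_sinh_div_mul_cosh_sub (c := c) ha).comp
      (tendsto_id.const_mul_atTop hk)).const_mul (4 * k * a / γ))).trans ?_
  · intro x
    exact ((hasDerivAt_const x (2 * k ^ 2)).div (hD_deriv x) (hD x).ne').congr_deriv
      (by field_simp; ring)
  · exact integrable_sq_of_le hu_int (fun x => (div_pos (by positivity) (hD x)).le)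
      fun x => (hu_le x).trans (div_le_self (by positivity) (Real.one_le_cosh _))
  · exact ((integrable_sinh_div_mul_cosh_sub_sq hk ha hac).const_mul (-(2 * k ^ 3 * a))).congr
      (ae_of_all _ fun x => by simp only [hD_def]; ring)
  · intro x
    refine ((((Real.hasDerivAt_sinh (k * x)).comp x (hasDerivAt_const_mul k)).div (hD_deriv x)
      (hD x).ne').const_mul _).congr_deriv ?_
    have := (hD x).ne'
    field_simp
    simp only [hD_def, Function.comp_apply]
    linear_combination 4 * ha2 + 4 * a ^ 2 * Real.cosh_sq_sub_sinh_sq (k * x)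
  · intro x
    simp only [hD_def, mul_neg, Real.sinh_neg, Real.cosh_neg, neg_div]
  · field_simp
    ring

lemma bright_range_of_pos {γ ω c : ℝ} (hγ : 0 < γ) (hc : -2 * √ω < c) (hc' : c < 2 * √ω) :
    0 < 4 * ω - c ^ 2 ∧ 0 < c ^ 2 + γ * (4 * ω - c ^ 2) ∧
      c < √(c ^ 2 + γ * (4 * ω - c ^ 2)) := by
  have hω : √ω ^ 2 = ω := sq_sqrt (sqrt_pos.1 (by linarith)).le
  have hk : 0 < 4 * ω - c ^ 2 := by nlinarith
  have ha : c ^ 2 < c ^ 2 + γ * (4 * ω - c ^ 2) := by nlinarith [mul_pos hγ hk]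
  refine ⟨hk, by nlinarith [sq_nonneg c], ?_⟩
  rcases le_or_gt c 0 with hc0 | hc0
  · exact hc0.trans_lt (sqrt_pos.2 (by nlinarith [sq_nonneg c]))
  · exact (lt_sqrt hc0.le).2 ha

lemma bright_range_of_neg {γ ω c : ℝ} (hγ : γ < 0) (hc : -2 * √ω < c)
    (hc' : c < -2 * √(-γ / (1 - γ)) * √ω) :
    0 < 4 * ω - c ^ 2 ∧ 0 < c ^ 2 + γ * (4 * ω - c ^ 2) ∧
      c < √(c ^ 2 + γ * (4 * ω - c ^ 2)) := by
  set s := √(-γ / (1 - γ))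
  have hγ1 : 0 < 1 - γ := by linarith
  have hs : s ^ 2 * (1 - γ) = -γ := by
    rw [sq_sqrt (div_nonneg (by linarith) hγ1.le)]; field_simp
  have hsω : 0 ≤ 2 * s * √ω := by positivity
  have hc0 : c < 0 := by nlinarith
  have hω : √ω ^ 2 = ω := sq_sqrt (sqrt_pos.1 (by linarith)).le
  have hk : 0 < 4 * ω - c ^ 2 := by nlinarith
  have hcs : 4 * s ^ 2 * ω < c ^ 2 := by nlinarith
  have ha : 0 < c ^ 2 + γ * (4 * ω - c ^ 2) := by nlinarith
  exact ⟨hk, ha, hc0.trans (sqrt_pos.2 ha)⟩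

/-- Momentum formula for the solitons (`γ ≠ 0`):
`P(φ_{ω,c}) = (c/2)(-1 + 1/γ) M(φ_{ω,c}) + (2/γ)√(4ω - c²)`. -/
theorem stmt_8 (b γ ω c : ℝ) (hb : b ≠ -3 / 16) (hγ : γ = 1 + 16 / 3 * b) (hω : 0 < ω)
    (hc1 : 0 < γ → -2 * Real.sqrt ω < c ∧ c ≤ 2 * Real.sqrt ω)
    (hc2 : γ < 0 → -2 * Real.sqrt ω < c ∧
      c < -2 * Real.sqrt (-γ / (1 - γ)) * Real.sqrt ω) :
    solMom γ ω c =
      c / 2 * (-1 + 1 / γ) * solMass γ ω c + 2 / γ * Real.sqrt (4 * ω - c ^ 2) := by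
  have hγ0 : γ ≠ 0 := by rintro rfl; exact hb (by linarith)
  by_cases hc : c = 2 * √ω
  · have hc0 : 0 < c := by rw [hc]; positivity
    have hγ_pos : 0 < γ := hγ0.lt_or_gt.resolve_left fun hγ_neg => by
      have := (hc2 hγ_neg).2
      have : 0 ≤ 2 * √(-γ / (1 - γ)) * √ω := by positivity
      linarith
    have hk : √(4 * ω - c ^ 2) = 0 := by
      rw [hc, mul_pow, sq_sqrt hω.le]; norm_num
    rw [solMom_eq_of_Phi_eq_algebraic hγ_pos hc0 fun x => if_pos hc, hk]
    ring
  · obtain ⟨hk, ha, hac⟩ : 0 < 4 * ω - c ^ 2 ∧ 0 < c ^ 2 + γ * (4 * ω - c ^ 2) ∧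
        c < √(c ^ 2 + γ * (4 * ω - c ^ 2)) := by
      rcases hγ0.lt_or_gt with hγ_neg | hγ_pos
      · exact bright_range_of_neg hγ_neg (hc2 hγ_neg).1 (hc2 hγ_neg).2
      · exact bright_range_of_pos hγ_pos (hc1 hγ_pos).1 ((hc1 hγ_pos).2.lt_of_ne hc)
    rw [solMom_eq_of_Phi_eq_bright hγ0 (sqrt_pos.2 hk) (sqrt_pos.2 ha) hac
      (by rw [sq_sqrt ha.le, sq_sqrt hk.le]) fun x => by rw [Phi, if_neg hc, sq_sqrt hk.le]]
    ring
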